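/- In the polyhedral decomposition Y = c(v^T Y) + z with z = (I - cv^T)Y and c = Σv(v^TΣv)^{-1}, the truncation bounds a = max_{ℓ:(Γc)_ℓ>0} (−(Γz)_ℓ)/(Γc)_ℓ and b = min_{ℓ:(Γc)_ℓ<0} (−(Γz)_ℓ)/(Γc)_ℓ satisfy a ≤ v^T Y ≤ b whenever ΓY ≥ 0. -/
import Mathlib

open Matrix Finset

/-- in the polyhedral decomposition `Y = c (vᵀY) + z` with
`c = Σv/(vᵀΣv)` and `z = (I - c vᵀ) Y`, the truncation bounds
`a = max_{ℓ : (Γc)_ℓ > 0} (-(Γz)_ℓ)/(Γc)_ℓ` and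
`b = min_{ℓ : (Γc)_ℓ < 0} (-(Γz)_ℓ)/(Γc)_ℓ`
satisfy `a ≤ vᵀY ≤ b` whenever `ΓY ≥ 0`. -/
theorem polyhedral_truncation_bounds
    {L N : ℕ} (Γ : Matrix (Fin L) (Fin N) ℝ) (S : Matrix (Fin N) (Fin N) ℝ)
    (hS : S.PosDef) (v Y : Fin N → ℝ) (hv : v ≠ 0)
    (c z : Fin N → ℝ)
    (hc : c = (v ⬝ᵥ S.mulVec v)⁻¹ • S.mulVec v)
    (hz : z = Y - (v ⬝ᵥ Y) • c)
    (hpos : (univ.filter fun ℓ => 0 < Γ.mulVec c ℓ).Nonempty)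
    (hneg : (univ.filter fun ℓ => Γ.mulVec c ℓ < 0).Nonempty)
    (hΓY : ∀ ℓ, 0 ≤ Γ.mulVec Y ℓ) :
    (univ.filter fun ℓ => 0 < Γ.mulVec c ℓ).sup' hpos
        (fun ℓ => (-(Γ.mulVec z ℓ)) / Γ.mulVec c ℓ) ≤ v ⬝ᵥ Y ∧
    v ⬝ᵥ Y ≤ (univ.filter fun ℓ => Γ.mulVec c ℓ < 0).inf' hneg
        (fun ℓ => (-(Γ.mulVec z ℓ)) / Γ.mulVec c ℓ) := by
  have key : ∀ ℓ, Γ.mulVec z ℓ = Γ.mulVec Y ℓ - (v ⬝ᵥ Y) * Γ.mulVec c ℓ := by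
    intro ℓ
    rw [hz, Matrix.mulVec_sub, Matrix.mulVec_smul]
    simp [smul_eq_mul]
  constructor
  · apply Finset.sup'_le
    intro ℓ hℓ
    rw [mem_filter] at hℓ
    rw [div_le_iff₀ hℓ.2]
    have h := hΓY ℓ
    nlinarith [key ℓ]
  · apply Finset.le_inf'
    intro ℓ hℓ
    rw [mem_filter] at hℓ
    rw [le_div_iff_of_neg hℓ.2]
    have h := hΓY ℓ
    nlinarith [key ℓ]
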